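/- arXiv:1006.3984 — 2 statements merged into one kernel-verified Lean document; each statement's English description precedes it below -/
import Mathlib

section
/- For every n ≥ 0 and every w ∈ H, one has ρ_{n+1}(w) = ρ_n(zw). -/
/-!
Every `C_n(w)` has the shape `∑ uᵢ ⊗ z^{⊗n} ⊗ vᵢ` with a tensor `∑ uᵢ ⊗ vᵢ ∈ H ⊗ H` that does not
depend on `n`: this holds for the generators, and the Leibniz rule only multiplies the outer factors.
Hence `ρ_n(w) = ∑ uᵢ zⁿ vᵢ`. Since `C_n(z) = C_n(x) + C_n(y) = 0`, the Leibniz rule gives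
`C_n(zw) = z ◇ C_n(w)`, i.e. `∑ uᵢ ⊗ z^{⊗n} ⊗ z vᵢ`, whose product is `∑ uᵢ z^{n+1} vᵢ = ρ_{n+1}(w)`.
-/

noncomputable section

open Finset

/-- Hoffman's algebra `H = ℚ⟨x,y⟩`, the noncommutative polynomial algebra
over `ℚ` in two indeterminates. -/
abbrev H : Type := FreeAlgebra ℚ (Fin 2)

/-- The indeterminate `x`. -/
def Hx : H := FreeAlgebra.ι ℚ 0

/-- The indeterminate `y`. -/
def Hy : H := FreeAlgebra.ι ℚ 1

/-- `z = x + y`. -/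
def Hz : H := Hx + Hy

/-- `z_k = x^(k-1) y`. -/
def zw (k : ℕ) : H := Hx ^ (k - 1) * Hy

/-- The monomial `z_{k 0} z_{k 1} ⋯ z_{k (l-1)}`. -/
def zwords {l : ℕ} (k : Fin l → ℕ) : H := (List.ofFn fun i => zw (k i)).prod

/-- The monomial `z_{k a} z_{k (a+1)} ⋯ z_{k (a+l-1)}`. -/
def zseq (k : ℕ → ℕ) (a l : ℕ) : H := ((List.range l).map fun t => zw (k (a + t))).prod

/-- `Ȟ¹`: the ℚ-span of the monomials `z_{k₁}⋯z_{k_l}` over tuples of positive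
integers not all equal to 1. -/
def Hcheck : Submodule ℚ H :=
  Submodule.span ℚ
    {w | ∃ (l : ℕ) (k : Fin (l + 1) → ℕ), (∀ i, 1 ≤ k i) ∧ (∃ i, k i ≠ 1) ∧ w = zwords k}

/-- `Ȟ¹_d`: the subspace of `Ȟ¹` spanned by the monomials of total degree `d`. -/
def HcheckDeg (d : ℕ) : Submodule ℚ H :=
  Submodule.span ℚ
    {w | ∃ (l : ℕ) (k : Fin (l + 1) → ℕ),
      (∀ i, 1 ≤ k i) ∧ (∃ i, k i ≠ 1) ∧ (∑ i, k i) = d ∧ w = zwords k}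

/-- `H⁰_d`: the span of the monomials `z_{k₁}⋯z_{k_l}` of total degree `d` with `k₁ ≥ 2`. -/
def H0Deg (d : ℕ) : Submodule ℚ H :=
  Submodule.span ℚ
    {w | ∃ (l : ℕ) (k : Fin (l + 1) → ℕ),
      (∀ i, 1 ≤ k i) ∧ 2 ≤ k 0 ∧ (∑ i, k i) = d ∧ w = zwords k}

/-- The multiplication map `M_n : H^{⊗(n+2)} → H`. -/
def Mn (n : ℕ) : TensorPower ℚ (n + 2) H →ₗ[ℚ] H :=
  PiTensorProduct.lift (MultilinearMap.mkPiAlgebraFin ℚ (n + 2) H)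

/-- The `H`-bimodule action `a ◇ t ◇ b` on `H^{⊗(n+2)}`:
`a ◇ (w₁⊗⋯⊗w_{n+2}) ◇ b = w₁b ⊗ w₂ ⊗ ⋯ ⊗ w_{n+1} ⊗ a w_{n+2}`. -/
def dia (n : ℕ) (a : H) (t : TensorPower ℚ (n + 2) H) (b : H) : TensorPower ℚ (n + 2) H :=
  PiTensorProduct.map
    (fun i => if i = 0 then LinearMap.mulRight ℚ b
      else if i = Fin.last (n + 1) then LinearMap.mulLeft ℚ a
      else LinearMap.id) t

/-- The pure tensor `x ⊗ z^{⊗n} ⊗ y ∈ H^{⊗(n+2)}`. -/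
def xzy (n : ℕ) : TensorPower ℚ (n + 2) H :=
  PiTensorProduct.tprod ℚ
    (fun i : Fin (n + 2) => if i = 0 then Hx else if i = Fin.last (n + 1) then Hy else Hz)

/-- The pure tensor `x ⊗ y^{⊗(n+1)} ∈ H^{⊗(n+2)}`. -/
def xyy (n : ℕ) : TensorPower ℚ (n + 2) H :=
  PiTensorProduct.tprod ℚ (fun i : Fin (n + 2) => if i = 0 then Hx else Hy)

/-- The defining properties of the family of maps `C_n : H → H^{⊗(n+2)}`. -/
def IsC (C : ∀ n : ℕ, H →ₗ[ℚ] TensorPower ℚ (n + 2) H) : Prop :=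
  ∀ n, C n 1 = 0 ∧ C n Hx = xzy n ∧ C n Hy = -xzy n ∧
    ∀ w w' : H, C n (w * w') = dia n 1 (C n w) w' + dia n w (C n w') 1

/-- `γ`: the algebra endomorphism of `H` with `γ(x) = x`, `γ(y) = x + y`
(it is an automorphism). -/
def gam : H →ₐ[ℚ] H := FreeAlgebra.lift ℚ ![Hx, Hz]

/-- `γ⁻¹`: the inverse automorphism of `γ`, having `γ⁻¹(x) = x`, `γ⁻¹(y) = y - x`. -/
def gamInv : H →ₐ[ℚ] H := FreeAlgebra.lift ℚ ![Hx, Hy - Hx]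

/-- The defining properties of the family of maps `C̄_n : H → H^{⊗(n+2)}`. -/
def IsCbar (C : ∀ n : ℕ, H →ₗ[ℚ] TensorPower ℚ (n + 2) H) : Prop :=
  ∀ n, C n 1 = 0 ∧ C n Hx = xyy n ∧ C n Hy = -xyy n ∧
    ∀ w w' : H, C n (w * w') = dia n 1 (C n w) (gamInv w') + dia n (gamInv w) (C n w') 1

/-- The value of `ρ` on the monomial `z_{k 0} ⋯ z_{k (l-1)}` (for `k` periodic of
period `l`):
`∑_{j<l} ∑_{i=1}^{k_j−1} z_{k_j−i+1} z_{k_{j+1}} ⋯ z_{k_{j+l−1}} z_i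
  − ∑_{j<l} z_{k_j+1} z_{k_{j+1}} ⋯ z_{k_{j+l−1}}`. -/
def rhoFormula (k : ℕ → ℕ) (l : ℕ) : H :=
  (∑ j ∈ Finset.range l, ∑ i ∈ Finset.Icc 1 (k j - 1),
      zw (k j - i + 1) * zseq k (j + 1) (l - 1) * zw i) -
    ∑ j ∈ Finset.range l, zw (k j + 1) * zseq k (j + 1) (l - 1)

/-- The defining property of the ℚ-linear map `ρ` on `Ȟ¹`: its values on the
monomials `z_{k₁}⋯z_{k_l}` (positive indices, not all 1). -/
def IsRho (rho : H →ₗ[ℚ] H) : Prop :=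
  ∀ (l : ℕ) (k : ℕ → ℕ), 1 ≤ l → (∀ j, k (j + l) = k j) → (∀ j, 1 ≤ k j) →
    (∃ j, k j ≠ 1) → rho (zseq k 0 l) = rhoFormula k l

/-- The defining property of the map `d` on `ℚ + Hy`: `d(1) = 1`, `d(wy) = γ(w)y`. -/
def IsD (dm : H →ₗ[ℚ] H) : Prop := dm 1 = 1 ∧ ∀ w : H, dm (w * Hy) = gam w * Hy

/-- The `n`-step Lucas numbers `L^n_m`: `L^n_m = 2^m − 1` for `m ≤ n`,
`L^n_m = L^n_{m−1} + ⋯ + L^n_{m−n}` for `m ≥ n+1`, and `L^0_m = 0`. -/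
def Lucas (n : ℕ) (m : ℕ) : ℕ :=
  if _hn : n = 0 then 0
  else if _hm : m ≤ n then 2 ^ m - 1
  else ∑ i ∈ (Finset.Icc 1 n).attach, Lucas n (m - i.1)
termination_by m
decreasing_by
  have h1 := (Finset.mem_Icc.mp i.2).1
  omega

/-- The multiple zeta value `ζ(k₁,…,k_l) = ∑_{n₁ > ⋯ > n_l ≥ 1} 1/(n₁^{k₁}⋯n_l^{k_l})`. -/
def mzeta {l : ℕ} (k : Fin l → ℕ) : ℝ :=
  ∑' n : {n : Fin l → ℕ // StrictAnti n ∧ ∀ i, 0 < n i}, ∏ i, ((n.1 i : ℝ) ^ k i)⁻¹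

/-- The multiple zeta-star value
`ζ*(k₁,…,k_l) = ∑_{n₁ ≥ ⋯ ≥ n_l ≥ 1} 1/(n₁^{k₁}⋯n_l^{k_l})`. -/
def mzetaStar {l : ℕ} (k : Fin l → ℕ) : ℝ :=
  ∑' n : {n : Fin l → ℕ // Antitone n ∧ ∀ i, 0 < n i}, ∏ i, ((n.1 i : ℝ) ^ k i)⁻¹

/-- The defining property of the map `Z : H⁰ → ℝ`. -/
def IsZ (Z : H →ₗ[ℚ] ℝ) : Prop :=
  Z 1 = 1 ∧ ∀ (l : ℕ) (k : Fin (l + 1) → ℕ), (∀ i, 1 ≤ k i) → 2 ≤ k 0 →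
    Z (zwords k) = mzeta k

/-- The defining property of the map `Z̄ : H⁰ → ℝ`. -/
def IsZbar (Z : H →ₗ[ℚ] ℝ) : Prop :=
  Z 1 = 1 ∧ ∀ (l : ℕ) (k : Fin (l + 1) → ℕ), (∀ i, 1 ≤ k i) → 2 ≤ k 0 →
    Z (zwords k) = mzetaStar k

/-- The defining property of the map `α : Hy → Hy`, dividing each monomial by
its depth. -/
def IsAlpha (am : H →ₗ[ℚ] H) : Prop :=
  ∀ (l : ℕ) (k : Fin (l + 1) → ℕ), (∀ i, 1 ≤ k i) →
    am (zwords k) = ((l : ℚ) + 1)⁻¹ • zwords k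

/-- Cyclic equivalence on tuples: `v` is a cyclic shift of `u`.  Here `Fin 2`
encodes the two symbols: `0 = y`, `1 = z`. -/
def cycRel (l : ℕ) (u v : Fin l → Fin 2) : Prop := ∃ j : Fin l, ∀ t, v t = u (t + j)

/-- `X_{l,n}`: tuples in `{y,z}^l` containing at least `n` cyclically consecutive `z`'s
(i.e. some cyclic shift begins with `z^n`).  `0 = y`, `1 = z`. -/
def Xln (l n : ℕ) : Set (Fin l → Fin 2) :=
  {u | ∃ j : Fin l, ∀ t : Fin l, (t : ℕ) < n → u (t + j) = 1}

/-- `Y_{l,n} = X_{l,n}/∼`, the set of cyclic equivalence classes in `X_{l,n}`. -/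
def Yln (l n : ℕ) : Type := Quot (fun u v : Xln l n => cycRel l u.1 v.1)

/-- The letters `y`, `z` of `{y,z}`-tuples, as elements of `H`: `0 ↦ y`, `1 ↦ z`. -/
def yz : Fin 2 → H := ![Hy, Hz]

/-- The product `u₁⋯u_l ∈ H` of a `{y,z}`-tuple. -/
def wprod {l : ℕ} (u : Fin l → Fin 2) : H := (List.ofFn fun t => yz (u t)).prod

open scoped TensorProduct

section Sandwich

variable (n : ℕ) (c : H)

def sandwichFun (u v : H) : Fin (n + 2) → H :=
  fun i => if i = 0 then u else if i = Fin.last (n + 1) then v else c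

lemma sandwichFun_eq_update_zero (u v : H) :
    sandwichFun n c u v = Function.update (sandwichFun n c 0 v) 0 u := by
  funext i
  by_cases h : i = 0 <;> simp [sandwichFun, h]

lemma sandwichFun_eq_update_last (u v : H) :
    sandwichFun n c u v = Function.update (sandwichFun n c u 0) (Fin.last (n + 1)) v := by
  funext i
  by_cases h : i = Fin.last (n + 1) <;> simp [sandwichFun, h]

/-- `u ⊗ v ↦ u ⊗ c^{⊗n} ⊗ v`. -/
def sandwich : H ⊗[ℚ] H →ₗ[ℚ] TensorPower ℚ (n + 2) H :=
  TensorProduct.lift <| LinearMap.mk₂ ℚ (fun u v => PiTensorProduct.tprod ℚ (sandwichFun n c u v))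
    (fun u u' v => by
      rw [sandwichFun_eq_update_zero n c (u + u'), sandwichFun_eq_update_zero n c u,
        sandwichFun_eq_update_zero n c u', MultilinearMap.map_update_add])
    (fun r u v => by
      rw [sandwichFun_eq_update_zero n c (r • u), sandwichFun_eq_update_zero n c u,
        MultilinearMap.map_update_smul])
    (fun u v v' => by
      rw [sandwichFun_eq_update_last n c u (v + v'), sandwichFun_eq_update_last n c u v,
        sandwichFun_eq_update_last n c u v', MultilinearMap.map_update_add])
    (fun r u v => by
      rw [sandwichFun_eq_update_last n c u (r • v), sandwichFun_eq_update_last n c u v,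
        MultilinearMap.map_update_smul])

lemma sandwich_tmul (u v : H) :
    sandwich n c (u ⊗ₜ v) = PiTensorProduct.tprod ℚ (sandwichFun n c u v) := rfl

/-- The bimodule action `a ◇ (u ⊗ v) ◇ b = ub ⊗ av` on `H ⊗ H`. -/
def diaTensor (a b : H) : H ⊗[ℚ] H →ₗ[ℚ] H ⊗[ℚ] H :=
  TensorProduct.map (LinearMap.mulRight ℚ b) (LinearMap.mulLeft ℚ a)

lemma dia_sandwich (a b : H) (s : H ⊗[ℚ] H) :
    dia n a (sandwich n c s) b = sandwich n c (diaTensor a b s) := by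
  induction s using TensorProduct.induction_on with
  | zero => simp only [dia, map_zero]
  | tmul u v =>
    rw [sandwich_tmul, dia, PiTensorProduct.map_tprod, diaTensor, TensorProduct.map_tmul,
      sandwich_tmul]
    congr 1
    funext i
    by_cases h₀ : i = 0
    · simp [sandwichFun, h₀]
    · by_cases hl : i = Fin.last (n + 1) <;> simp [sandwichFun, h₀, hl]
  | add s t hs ht => simp only [dia, map_add] at hs ht ⊢; rw [hs, ht]

lemma Mn_sandwich_tmul (u v : H) : Mn n (sandwich n c (u ⊗ₜ v)) = u * c ^ n * v := by
  rw [sandwich_tmul, Mn, PiTensorProduct.lift.tprod, MultilinearMap.mkPiAlgebraFin_apply,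
    List.ofFn_succ, List.ofFn_succ', List.prod_cons, List.prod_concat]
  have hmid : (fun i : Fin n => sandwichFun n c u v i.castSucc.succ) = fun _ => c := by
    funext i
    simp [sandwichFun, Fin.ext_iff, i.isLt.ne]
  rw [hmid, List.ofFn_const, List.prod_replicate]
  simp [sandwichFun, mul_assoc]

lemma Mn_succ_sandwich (s : H ⊗[ℚ] H) :
    Mn (n + 1) (sandwich (n + 1) c s) = Mn n (sandwich n c (diaTensor c 1 s)) := by
  induction s using TensorProduct.induction_on with
  | zero => simp only [map_zero]
  | tmul u v =>
    simp only [diaTensor, TensorProduct.map_tmul, LinearMap.mulRight_apply,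
      LinearMap.mulLeft_apply, mul_one, Mn_sandwich_tmul, pow_succ, mul_assoc]
  | add s t hs ht => simp only [map_add, hs, ht]

end Sandwich

lemma exists_C_eq_sandwich {C : ∀ n : ℕ, H →ₗ[ℚ] TensorPower ℚ (n + 2) H} (hC : IsC C) (w : H) :
    ∃ s : H ⊗[ℚ] H, ∀ n, C n w = sandwich n Hz s := by
  induction w using FreeAlgebra.induction with
  | grade0 r =>
    refine ⟨0, fun n => ?_⟩
    rw [Algebra.algebraMap_eq_smul_one, map_smul, (hC n).1, smul_zero, map_zero]
  | grade1 i =>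
    fin_cases i
    · exact ⟨Hx ⊗ₜ Hy, fun n => (hC n).2.1⟩
    · exact ⟨-(Hx ⊗ₜ Hy), fun n => by rw [map_neg]; exact (hC n).2.2.1⟩
  | mul w w' hw hw' =>
    obtain ⟨s, hs⟩ := hw
    obtain ⟨t, ht⟩ := hw'
    exact ⟨diaTensor 1 w' s + diaTensor w 1 t, fun n => by
      rw [(hC n).2.2.2, hs, ht, dia_sandwich, dia_sandwich, map_add]⟩
  | add w w' hw hw' =>
    obtain ⟨s, hs⟩ := hw
    obtain ⟨t, ht⟩ := hw'
    exact ⟨s + t, fun n => by rw [map_add, hs, ht, map_add]⟩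

lemma C_z_eq_zero {C : ∀ n : ℕ, H →ₗ[ℚ] TensorPower ℚ (n + 2) H} (hC : IsC C) (n : ℕ) :
    C n Hz = 0 := by
  rw [Hz, map_add, (hC n).2.1, (hC n).2.2.1, add_neg_cancel]

/-- `ρ_{n+1}(w) = ρ_n(zw)` for all `n ≥ 0` and `w ∈ H`. -/
theorem rho_succ_eq_rho_z_mul (C : ∀ n : ℕ, H →ₗ[ℚ] TensorPower ℚ (n + 2) H) (hC : IsC C)
    (n : ℕ) (w : H) :
    Mn (n + 1) (C (n + 1) w) = Mn n (C n (Hz * w)) := by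
  obtain ⟨s, hs⟩ := exists_C_eq_sandwich hC w
  have hdia : dia n 1 0 w = 0 := map_zero _
  rw [(hC n).2.2.2, C_z_eq_zero hC, hdia, zero_add, hs, hs, dia_sandwich, Mn_succ_sandwich]
end
end

section
/- For every integer k ≥ 2 there is the chain of inclusions of ℚ-vector subspaces {0} = ρ_{k−2}(Ȟ¹₁) ⊆ ρ_{k−3}(Ȟ¹₂) ⊆ ⋯ ⊆ ρ₁(Ȟ¹_{k−2}) ⊆ ρ₀(Ȟ¹_{k−1}); that is, ρ_{n+1}(Ȟ¹_{k−n−2}) ⊆ ρ_n(Ȟ¹_{k−n−1}) for every n ∈ {0, 1, …, k−3}. -/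
noncomputable section

open Finset

/-!
The key identity is `ρ_{n+1}(w) = ρ_n(z w)`. The generators `x ⊗ z^{⊗(n+1)} ⊗ y` and
`x ⊗ z^{⊗n} ⊗ y` have the same product once an extra `z` is multiplied into the last slot,
and both sides of `M_{n+1}(a ◇ C_{n+1}(w) ◇ b) = M_n(z a ◇ C_n(w) ◇ b)` obey the same Leibniz
rule, so they agree for all `w`; at `a = b = 1` the right side is `M_n(C_n(z w))` because
`C_n(z) = C_n(x) + C_n(y) = 0`. Finally `z = x + y` maps `Ȟ¹_d` into `Ȟ¹_{d+1}`, and `Ȟ¹₁ = 0`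
since every admissible index tuple has some entry `≥ 2`.
-/

open PiTensorProduct

section Dia

variable (n : ℕ) (a b : H)

lemma dia_zero : dia n a 0 b = 0 := map_zero _

lemma dia_add (t t' : TensorPower ℚ (n + 2) H) :
    dia n a (t + t') b = dia n a t b + dia n a t' b := map_add _ _ _

lemma dia_neg (t : TensorPower ℚ (n + 2) H) : dia n a (-t) b = -dia n a t b := map_neg _ _

lemma dia_one_one (t : TensorPower ℚ (n + 2) H) : dia n 1 t 1 = t := by
  have hid : (fun i : Fin (n + 2) => if i = 0 then LinearMap.mulRight ℚ (1 : H)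
      else if i = Fin.last (n + 1) then LinearMap.mulLeft ℚ 1 else LinearMap.id) =
      fun _ => LinearMap.id := by
    funext i
    split_ifs <;> ext <;> simp
  rw [dia, hid, map_id, LinearMap.id_apply]

lemma dia_dia (a' b' : H) (t : TensorPower ℚ (n + 2) H) :
    dia n a (dia n a' t b') b = dia n (a * a') t (b' * b) := by
  unfold dia
  rw [← LinearMap.comp_apply, ← PiTensorProduct.map_comp]
  congr 2
  funext i
  split_ifs <;> ext <;> simp [mul_assoc]

end Dia

lemma Mn_tprod (n : ℕ) (v : Fin (n + 2) → H) : Mn n (tprod ℚ v) = (List.ofFn v).prod := by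
  rw [Mn, lift.tprod, MultilinearMap.mkPiAlgebraFin_apply]

lemma Mn_dia_xzy (n : ℕ) (a b : H) : Mn n (dia n a (xzy n) b) = Hx * b * Hz ^ n * a * Hy := by
  have hmid (i : Fin n) : (i : ℕ) ≠ n := i.isLt.ne
  rw [dia, xzy, map_tprod, Mn_tprod, List.ofFn_succ, List.ofFn_succ']
  simp [Fin.ext_iff, hmid, mul_assoc]

namespace IsC

variable {C : ∀ n : ℕ, H →ₗ[ℚ] TensorPower ℚ (n + 2) H} (hC : IsC C) (n : ℕ)
include hC

lemma map_algebraMap (r : ℚ) : C n (algebraMap ℚ H r) = 0 := by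
  rw [Algebra.algebraMap_eq_smul_one, map_smul, (hC n).1, smul_zero]

lemma map_Hz : C n Hz = 0 := by
  rw [Hz, map_add, (hC n).2.1, (hC n).2.2.1, add_neg_cancel]

lemma Mn_dia_succ (w a b : H) :
    Mn (n + 1) (dia (n + 1) a (C (n + 1) w) b) = Mn n (dia n (Hz * a) (C n w) b) := by
  induction w using FreeAlgebra.induction generalizing a b with
  | grade0 r => rw [map_algebraMap hC, map_algebraMap hC, dia_zero, dia_zero, map_zero, map_zero]
  | grade1 i =>
    have hx : Mn (n + 1) (dia (n + 1) a (xzy (n + 1)) b) = Mn n (dia n (Hz * a) (xzy n) b) := by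
      simp only [Mn_dia_xzy, pow_succ, mul_assoc]
    fin_cases i
    · change Mn (n + 1) (dia (n + 1) a (C (n + 1) Hx) b) = Mn n (dia n (Hz * a) (C n Hx) b)
      rw [(hC _).2.1, (hC _).2.1, hx]
    · change Mn (n + 1) (dia (n + 1) a (C (n + 1) Hy) b) = Mn n (dia n (Hz * a) (C n Hy) b)
      rw [(hC _).2.2.1, (hC _).2.2.1, dia_neg, dia_neg, map_neg, map_neg, hx]
  | mul w w' ihw ihw' =>
    simp only [(hC _).2.2.2 w w', dia_add, map_add, dia_dia, ihw, ihw', mul_assoc, mul_one,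
      one_mul]
  | add w w' ihw ihw' => simp only [map_add, dia_add, ihw, ihw']

lemma Mn_comp_succ :
    (Mn (n + 1)).comp (C (n + 1)) = ((Mn n).comp (C n)).comp (LinearMap.mulLeft ℚ Hz) := by
  ext w
  calc Mn (n + 1) (C (n + 1) w) = Mn (n + 1) (dia (n + 1) 1 (C (n + 1) w) 1) := by
        rw [dia_one_one]
    _ = Mn n (dia n Hz (C n w) 1) := by rw [Mn_dia_succ hC, mul_one]
    _ = Mn n (C n (Hz * w)) := by rw [(hC n).2.2.2, map_Hz hC, dia_zero, zero_add]

end IsC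

lemma zw_one : zw 1 = Hy := by
  rw [zw, pow_zero, one_mul]

lemma Hx_mul_zw {m : ℕ} (hm : 1 ≤ m) : Hx * zw m = zw (m + 1) := by
  rw [zw, zw, ← mul_assoc, ← pow_succ', Nat.sub_add_cancel hm, Nat.add_sub_cancel]

lemma zwords_cons_one {l : ℕ} (k : Fin l → ℕ) :
    zwords (Fin.cons 1 k : Fin (l + 1) → ℕ) = Hy * zwords k := by
  rw [zwords, List.ofFn_succ, List.prod_cons, Fin.cons_zero, zw_one]
  simp only [Fin.cons_succ, zwords]

lemma Hx_mul_zwords {l : ℕ} (k : Fin (l + 1) → ℕ) (hk : 1 ≤ k 0) :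
    Hx * zwords k = zwords (Function.update k 0 (k 0 + 1)) := by
  simp only [zwords, List.ofFn_succ, List.prod_cons, Function.update_self, ← Hx_mul_zw hk,
    mul_assoc, Function.update_of_ne (Fin.succ_ne_zero _)]

section HcheckDeg

variable {d l : ℕ} {k : Fin (l + 1) → ℕ}

lemma HcheckDeg_one : HcheckDeg 1 = ⊥ := by
  rw [HcheckDeg, Submodule.span_eq_bot]
  rintro _ ⟨l, k, hk, ⟨i, hi⟩, hsum, -⟩
  have := Finset.single_le_sum (fun j _ => Nat.zero_le (k j)) (Finset.mem_univ i)
  have := hk i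
  omega

lemma Hx_mul_zwords_mem_HcheckDeg (hk : ∀ i, 1 ≤ k i) (hsum : ∑ i, k i = d) :
    Hx * zwords k ∈ HcheckDeg (d + 1) := by
  refine Submodule.subset_span ⟨l, Function.update k 0 (k 0 + 1), fun i => ?_,
    ⟨0, by simpa using Nat.one_le_iff_ne_zero.mp (hk 0)⟩, ?_, Hx_mul_zwords k (hk 0)⟩
  · rcases eq_or_ne i 0 with rfl | hi
    · simp
    · simpa [Function.update_of_ne hi] using hk i
  · rw [Finset.sum_update_of_mem (Finset.mem_univ 0), ← hsum,
      ← Finset.add_sum_erase _ k (Finset.mem_univ 0), Finset.sdiff_singleton_eq_erase]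
    ring

lemma Hy_mul_zwords_mem_HcheckDeg (hk : ∀ i, 1 ≤ k i) (hne : ∃ i, k i ≠ 1)
    (hsum : ∑ i, k i = d) : Hy * zwords k ∈ HcheckDeg (d + 1) := by
  obtain ⟨i, hi⟩ := hne
  refine Submodule.subset_span ⟨l + 1, Fin.cons 1 k, Fin.cases le_rfl hk, ⟨i.succ, hi⟩, ?_,
    (zwords_cons_one k).symm⟩
  rw [Fin.sum_cons, hsum, add_comm]

lemma map_mulLeft_Hz_HcheckDeg_le (d : ℕ) :
    (HcheckDeg d).map (LinearMap.mulLeft ℚ Hz) ≤ HcheckDeg (d + 1) := by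
  rw [HcheckDeg, Submodule.map_span_le]
  rintro _ ⟨l, k, hk, hne, hsum, rfl⟩
  rw [LinearMap.mulLeft_apply, Hz, add_mul]
  exact add_mem (Hx_mul_zwords_mem_HcheckDeg hk hsum) (Hy_mul_zwords_mem_HcheckDeg hk hne hsum)

end HcheckDeg

theorem rho_stratification_general (k : ℕ)
    (C : ∀ n : ℕ, H →ₗ[ℚ] TensorPower ℚ (n + 2) H) (hC : IsC C) :
    Submodule.map ((Mn (k - 2)).comp (C (k - 2))) (HcheckDeg 1) = ⊥ ∧
    ∀ n : ℕ, n + 3 ≤ k →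
      Submodule.map ((Mn (n + 1)).comp (C (n + 1))) (HcheckDeg (k - n - 2)) ≤
        Submodule.map ((Mn n).comp (C n)) (HcheckDeg (k - n - 1)) := by
  refine ⟨by rw [HcheckDeg_one, Submodule.map_bot], fun n hn => ?_⟩
  rw [hC.Mn_comp_succ, Submodule.map_comp, show k - n - 1 = k - n - 2 + 1 by omega]
  exact Submodule.map_mono (map_mulLeft_Hz_HcheckDeg_le _)

/-- For `k ≥ 2`: `{0} = ρ_{k−2}(Ȟ¹₁)` and
`ρ_{n+1}(Ȟ¹_{k−n−2}) ⊆ ρ_n(Ȟ¹_{k−n−1})` for every `n ∈ {0, 1, …, k−3}`;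
that is, the chain
`{0} = ρ_{k−2}(Ȟ¹₁) ⊆ ρ_{k−3}(Ȟ¹₂) ⊆ ⋯ ⊆ ρ₀(Ȟ¹_{k−1})`. -/
theorem rho_stratification (k : ℕ) (hk : 2 ≤ k)
    (C : ∀ n : ℕ, H →ₗ[ℚ] TensorPower ℚ (n + 2) H) (hC : IsC C) :
    Submodule.map ((Mn (k - 2)).comp (C (k - 2))) (HcheckDeg 1) = ⊥ ∧
    ∀ n : ℕ, n + 3 ≤ k →
      Submodule.map ((Mn (n + 1)).comp (C (n + 1))) (HcheckDeg (k - n - 2)) ≤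
        Submodule.map ((Mn n).comp (C n)) (HcheckDeg (k - n - 1)) :=
  rho_stratification_general k C hC
end
end
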